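/- arXiv:1809.07288 — 3 statements merged into one kernel-verified Lean document; each statement's English description precedes it below -/
import Mathlib

section
/- Let X(t) = { x ∈ ℝ² | x₂ ≥ 0 and x₂ ≤ x₁² − t }. Then X is not forward Lipschitz continuous at t = 0; that is, there is no L > 0 and D > 0 such that X(0) ⊆ X(δ) + δL𝔹 for all δ ∈ [0, D). -/
/-! The origin lies in `X 0`, but a point of `X δ` has first coordinate of square at least `δ`,
so it lies at distance at least `√δ` from the origin. Forward Lipschitz continuity would put such
a point within `δ L` of the origin, and `√δ ≤ δ L` fails for small `δ`. -/

open Filter Topology Metric Set Pointwise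

/-- Forward Lipschitz continuity of `X` at time `t` with constant `L`. -/
def forwardLipschitzAt (X : ℝ → Set (EuclideanSpace ℝ (Fin 2)))
    (t : ℝ) (L : ℝ) : Prop :=
  ∃ D > 0, ∀ δ, 0 ≤ δ → δ < D →
    X t ⊆ X (t + δ) + (δ * L) • Metric.closedBall (0 : EuclideanSpace ℝ (Fin 2)) 1

theorem forwardLipschitzAt.exists_dist_le {X : ℝ → Set (EuclideanSpace ℝ (Fin 2))} {t L : ℝ}
    (h : forwardLipschitzAt X t L) :
    ∃ D > 0, ∀ δ, 0 ≤ δ → δ < D → ∀ x ∈ X t, ∃ y ∈ X (t + δ), dist x y ≤ δ * |L| := by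
  obtain ⟨D, hD, hsub⟩ := h
  refine ⟨D, hD, fun δ hδ hδD x hx => ?_⟩
  obtain ⟨y, hy, z, hz, rfl⟩ := hsub δ hδ hδD hx
  rw [smul_unitClosedBall, mem_closedBall_zero_iff, Real.norm_eq_abs, abs_mul,
    abs_of_nonneg hδ] at hz
  exact ⟨y, hy, by rwa [dist_eq_norm, add_sub_cancel_left]⟩

theorem le_norm_sq_of_le_sq_sub {ι : Type*} [Fintype ι] {t : ℝ} {y : EuclideanSpace ℝ ι}
    {i j : ι} (hy : 0 ≤ y j) (hyt : y j ≤ y i ^ 2 - t) : t ≤ ‖y‖ ^ 2 := by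
  have hi : |y i| ≤ ‖y‖ := PiLp.norm_apply_le y i
  nlinarith [sq_abs (y i), abs_nonneg (y i)]

/-- `X(t) = {x ∈ ℝ² | x₂ ≥ 0, x₂ ≤ x₁² − t}` is not forward Lipschitz
continuous at `t = 0`. -/
theorem not_forwardLipschitz_parabola :
    ¬ ∃ L > 0, forwardLipschitzAt
      (fun t => {x : EuclideanSpace ℝ (Fin 2) | 0 ≤ x 1 ∧ x 1 ≤ (x 0) ^ 2 - t})
      0 L := by
  rintro ⟨L, hL, hX⟩
  obtain ⟨D, hD, hclose⟩ := hX.exists_dist_le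
  set δ := min (D / 2) (1 / (2 * L ^ 2))
  have hδ : 0 < δ := lt_min (by linarith) (by positivity)
  have hδD : δ < D := (min_le_left _ _).trans_lt (by linarith)
  have hδL : δ * L ^ 2 ≤ 1 / 2 := by
    have := min_le_right (D / 2) (1 / (2 * L ^ 2))
    rw [le_div_iff₀ (by positivity)] at this
    linarith
  obtain ⟨y, ⟨hy1, hyδ⟩, hyL⟩ := hclose δ hδ.le hδD 0 (by simp)
  rw [dist_zero_left, abs_of_pos hL] at hyL
  refine lt_irrefl δ ?_
  calc δ ≤ ‖y‖ ^ 2 := le_norm_sq_of_le_sq_sub hy1 (by simpa using hyδ)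
    _ ≤ (δ * L) ^ 2 := pow_le_pow_left₀ (norm_nonneg y) hyL 2
    _ = δ * (δ * L ^ 2) := by ring
    _ ≤ δ * (1 / 2) := by gcongr
    _ < δ := by linarith
end

section
/- Let X_a(t) = { x ∈ ℝ² | x₂ ≥ 0 and x₂ ≤ |x₁| − t }. Then the temporal tangent cone of X_a at the point x = (0,0) and time t = 0 equals { v ∈ ℝ² | v₂ ≥ 0 and v₂ ≤ |v₁| − 1 }. -/
/-!
The wedge `W t = {x | 0 ≤ x₂ ≤ |x₁| - t}` is homogeneous: `c • W t = W (c * t)` for `c > 0`.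
Hence every difference quotient `δ⁻¹ • (y - 0)` with `y ∈ W δ` lies in the closed set `W 1`,
which bounds the cone from above, and conversely every `v ∈ W 1` is realised by the exact
curve `δ ↦ δ • v ∈ W δ`.
-/

open Filter Topology Metric Set

/-- Temporal tangent cone of a set-valued map on ℝ². -/
def temporalTangentCone (X : ℝ → Set (EuclideanSpace ℝ (Fin 2)))
    (t : ℝ) (x : EuclideanSpace ℝ (Fin 2)) : Set (EuclideanSpace ℝ (Fin 2)) :=
  {v | ∃ (xk : ℕ → EuclideanSpace ℝ (Fin 2)) (δk : ℕ → ℝ),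
    (∀ k, 0 < δk k) ∧ Tendsto δk atTop (𝓝 0) ∧ Tendsto xk atTop (𝓝 x) ∧
    (∀ k, xk k ∈ X (t + δk k)) ∧
    Tendsto (fun k => (δk k)⁻¹ • (xk k - x)) atTop (𝓝 v)}

section TemporalTangentCone

variable {X : ℝ → Set (EuclideanSpace ℝ (Fin 2))} {t : ℝ} {x : EuclideanSpace ℝ (Fin 2)}

theorem temporalTangentCone_subset_of_isClosed {C : Set (EuclideanSpace ℝ (Fin 2))}
    (hC : IsClosed C) (h : ∀ δ > 0, ∀ y ∈ X (t + δ), δ⁻¹ • (y - x) ∈ C) :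
    temporalTangentCone X t x ⊆ C := by
  rintro v ⟨xk, δk, hδ_pos, -, -, hmem, hlim⟩
  exact hC.mem_of_tendsto hlim (Eventually.of_forall fun k => h _ (hδ_pos k) _ (hmem k))

theorem mem_temporalTangentCone_of_forall_pos {v : EuclideanSpace ℝ (Fin 2)}
    (h : ∀ δ > 0, x + δ • v ∈ X (t + δ)) : v ∈ temporalTangentCone X t x := by
  have hδ_pos : ∀ k : ℕ, (0 : ℝ) < ((k : ℝ) + 1)⁻¹ := fun k => by positivity
  have hδ_lim : Tendsto (fun k : ℕ => ((k : ℝ) + 1)⁻¹) atTop (𝓝 0) := by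
    simpa only [one_div] using tendsto_one_div_add_atTop_nhds_zero_nat (𝕜 := ℝ)
  refine ⟨fun k => x + ((k : ℝ) + 1)⁻¹ • v, fun k => ((k : ℝ) + 1)⁻¹, hδ_pos, hδ_lim, ?_,
    fun k => h _ (hδ_pos k), ?_⟩
  · simpa using tendsto_const_nhds.add (hδ_lim.smul_const v)
  · refine tendsto_const_nhds.congr fun k => ?_
    rw [add_sub_cancel_left, smul_smul, inv_mul_cancel₀ (hδ_pos k).ne', one_smul]

end TemporalTangentCone

def wedge (t : ℝ) : Set (EuclideanSpace ℝ (Fin 2)) :=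
  {x | 0 ≤ x 1 ∧ x 1 ≤ |x 0| - t}

theorem smul_mem_wedge_iff {c t : ℝ} (hc : 0 < c) {x : EuclideanSpace ℝ (Fin 2)} :
    c • x ∈ wedge (c * t) ↔ x ∈ wedge t := by
  simp only [wedge, mem_ofPred_eq, PiLp.smul_apply, smul_eq_mul, abs_mul, abs_of_pos hc,
    ← mul_sub, mul_nonneg_iff_of_pos_left hc, mul_le_mul_iff_right₀ hc]

theorem isClosed_wedge (t : ℝ) : IsClosed (wedge t) := by
  have h0 : Continuous fun x : EuclideanSpace ℝ (Fin 2) => x 0 := (EuclideanSpace.proj 0).continuous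
  have h1 : Continuous fun x : EuclideanSpace ℝ (Fin 2) => x 1 := (EuclideanSpace.proj 1).continuous
  exact (isClosed_le continuous_const h1).inter (isClosed_le h1 (h0.abs.sub continuous_const))

/-- the temporal tangent cone of
`X_a(t) = {x ∈ ℝ² | x₂ ≥ 0, x₂ ≤ |x₁| − t}` at `x = (0,0)`, `t = 0` equals
`{v | v₂ ≥ 0, v₂ ≤ |v₁| − 1}`. -/
theorem temporalTangentCone_wedge :
    temporalTangentCone
      (fun t => {x : EuclideanSpace ℝ (Fin 2) | 0 ≤ x 1 ∧ x 1 ≤ |x 0| - t})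
      0 0
      = {v : EuclideanSpace ℝ (Fin 2) | 0 ≤ v 1 ∧ v 1 ≤ |v 0| - 1} := by
  change temporalTangentCone wedge 0 0 = wedge 1
  refine Subset.antisymm (temporalTangentCone_subset_of_isClosed (isClosed_wedge 1) ?_)
    fun v hv => mem_temporalTangentCone_of_forall_pos fun δ hδ => ?_
  · intro δ hδ y hy
    rw [← smul_mem_wedge_iff hδ, smul_smul, mul_inv_cancel₀ hδ.ne', one_smul, mul_one, sub_zero]
    rwa [zero_add] at hy
  · simpa only [zero_add, mul_one] using (smul_mem_wedge_iff hδ).2 hv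
end

section
/- Let X_b(t) = { x ∈ ℝ² | x₂ ≥ 0 and x₂ ≤ x₁² − t }. Then the temporal tangent cone of X_b at x = (0,0) and time t = 0 is empty. -/
open Filter Topology Metric Set

/-!
The set `X_b(δ)` forces `δ ≤ x₁²`, so a point of `X_b(δ)` is at distance at least `√δ` from
the origin: it moves away faster than linearly in time. Quantitatively, along a sequence
`x_k ∈ X_b(δ_k)` we have `1 ≤ x_{k,1}² / δ_k = δ_k · (x_{k,1} / δ_k)²`, and if the difference
quotients `x_k / δ_k` converged, the right-hand side would tend to `0 · v₁² = 0`.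
-/

lemma tendsto_inv_mul_sq_of_tendsto_inv_mul {α : Type*} {l : Filter α} {δ y : α → ℝ} {w : ℝ}
    (hδ : Tendsto δ l (𝓝 0)) (hy : Tendsto (fun k => (δ k)⁻¹ * y k) l (𝓝 w)) :
    Tendsto (fun k => (δ k)⁻¹ * y k ^ 2) l (𝓝 0) := by
  have h := hδ.mul (hy.pow 2)
  rw [zero_mul] at h
  refine h.congr fun k => ?_
  rcases eq_or_ne (δ k) 0 with hk | hk
  · simp [hk]
  · field_simp

lemma le_sq_of_mem_parabola {δ : ℝ} {x : EuclideanSpace ℝ (Fin 2)}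
    (hx : 0 ≤ x 1 ∧ x 1 ≤ (x 0) ^ 2 - δ) : δ ≤ (x 0) ^ 2 := by
  linarith [hx.1, hx.2]

lemma tendsto_coord_of_tendsto {α : Type*} {l : Filter α} {f : α → EuclideanSpace ℝ (Fin 2)}
    {v : EuclideanSpace ℝ (Fin 2)} (hf : Tendsto f l (𝓝 v)) (i : Fin 2) :
    Tendsto (fun k => f k i) l (𝓝 (v i)) :=
  ((EuclideanSpace.proj i).continuous.tendsto v).comp hf

/-- the temporal tangent cone of
`X_b(t) = {x ∈ ℝ² | x₂ ≥ 0, x₂ ≤ x₁² − t}` at `x = (0,0)`, `t = 0` is empty. -/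
theorem temporalTangentCone_parabola_empty :
    temporalTangentCone
      (fun t => {x : EuclideanSpace ℝ (Fin 2) | 0 ≤ x 1 ∧ x 1 ≤ (x 0) ^ 2 - t})
      0 0 = ∅ := by
  refine eq_empty_of_forall_notMem fun v hv => ?_
  obtain ⟨xk, δk, hpos, hδ, -, hmem, hv⟩ := hv
  have hquot : Tendsto (fun k => (δk k)⁻¹ * xk k 0) atTop (𝓝 (v 0)) := by
    simpa using tendsto_coord_of_tendsto hv 0
  have hlim := tendsto_inv_mul_sq_of_tendsto_inv_mul hδ hquot
  have hone : ∀ k, 1 ≤ (δk k)⁻¹ * xk k 0 ^ 2 := fun k => by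
    rw [le_inv_mul_iff₀ (hpos k), mul_one]
    exact le_sq_of_mem_parabola (by simpa using hmem k)
  exact absurd (ge_of_tendsto' hlim hone) (by norm_num)
end
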